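/- With T(σ,k) = (k² − σ²)Q(k/σ) − (kσ/√(2π))e^{−k²/(2σ²)} extended by T(σ,0) = −σ²/2, M even, α = M−1, ᾱ_k = α−(2k−1), α_k = α+(2k−1), and K = {2,4,…,2(M−1)}: ((M−1)/M)σ² + (2/M)Σ_{k∈K} T(σ,k) = σ² + (2/M)Σ_{k=1}^{M/2}[T(σ,ᾱ_k) + T(σ,α_k)], and the right-hand side equals Ψ^PAM(σ²). -/

import Mathlib

open MeasureTheory ProbabilityTheory

/-- Standard Gaussian tail function `Q(x) = P(Z > x)`. -/
noncomputable def gaussQ (x : ℝ) : ℝ := ((gaussianReal 0 1) (Set.Ioi x)).toReal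

/-- `T(σ,k)` extended by `T(σ,0) = −σ²/2` (consistent with `Q(0) = 1/2`). -/
noncomputable def Text (σ k : ℝ) : ℝ :=
  if k = 0 then -σ^2 / 2
  else (k^2 - σ^2) * gaussQ (k / σ) - (k * σ / Real.sqrt (2 * Real.pi)) * Real.exp (-k^2 / (2 * σ^2))

/-- The state-evolution MSE `Ψ^PAM` for `M`-PAM, as a function of `σ`. -/
noncomputable def PsiPAM (M : ℕ) (σ : ℝ) : ℝ :=
  (2 / (M:ℝ)) * ∑ k ∈ Finset.Icc 1 (M / 2),
    (σ^2
      + (((M:ℝ) - 1 - (2 * (k:ℝ) - 1))^2 - σ^2) * gaussQ (((M:ℝ) - 1 - (2 * (k:ℝ) - 1)) / σ)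
      + (((M:ℝ) - 1 + (2 * (k:ℝ) - 1))^2 - σ^2) * gaussQ (((M:ℝ) - 1 + (2 * (k:ℝ) - 1)) / σ)
      - (σ / Real.sqrt (2 * Real.pi)) *
          (((M:ℝ) - 1 - (2 * (k:ℝ) - 1)) * Real.exp (-((M:ℝ) - 1 - (2 * (k:ℝ) - 1))^2 / (2 * σ^2))
            + ((M:ℝ) - 1 + (2 * (k:ℝ) - 1)) * Real.exp (-((M:ℝ) - 1 + (2 * (k:ℝ) - 1))^2 / (2 * σ^2))))

/-! Write `M = 2n`. The points `ᾱ_k = 2(n − k)` and `α_k = 2(n + k − 1)`, `k = 1, …, n`, run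
exactly once through the even numbers `0, 2, …, 2(M − 1)`; the extra point `0` contributes
`T(σ,0) = −σ²/2`, which is the difference between `σ²` and `((M − 1)/M) σ²` after scaling by
`2/M`. For the second identity, the closed form of `T(σ,x)` also holds at `x = 0`, because
`Q(0) = 1/2` by the symmetry of the standard Gaussian. -/

open Finset

lemma gaussQ_zero : gaussQ 0 = 1 / 2 := by
  have := nullSingletonClass_gaussianReal (μ := 0) one_ne_zero
  have hsymm : (gaussianReal 0 1).real (Set.Iic 0) = (gaussianReal 0 1).real (Set.Ioi 0) :=
    calc (gaussianReal 0 1).real (Set.Iic 0) = (gaussianReal 0 1).real (Set.Iio 0) :=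
          measureReal_congr Iio_ae_eq_Iic.symm
      _ = ((gaussianReal 0 1).map (fun x ↦ -x)).real (Set.Ioi 0) := by
        rw [map_measureReal_apply (by fun_prop) measurableSet_Ioi, Set.neg_preimage, Set.neg_Ioi,
          neg_zero]
      _ = (gaussianReal 0 1).real (Set.Ioi 0) := by rw [gaussianReal_map_neg, neg_zero]
  have hcompl := probReal_compl_eq_one_sub (μ := gaussianReal 0 1) (measurableSet_Ioi (a := 0))
  rw [Set.compl_Ioi, hsymm] at hcompl
  change (gaussianReal 0 1).real (Set.Ioi 0) = 1 / 2
  linarith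

lemma Text_zero (σ : ℝ) : Text σ 0 = -σ ^ 2 / 2 := if_pos rfl

lemma Text_eq (σ x : ℝ) :
    Text σ x = (x ^ 2 - σ ^ 2) * gaussQ (x / σ)
      - (x * σ / Real.sqrt (2 * Real.pi)) * Real.exp (-x ^ 2 / (2 * σ ^ 2)) := by
  rcases eq_or_ne x 0 with rfl | hx
  · simp [Text_zero, gaussQ_zero]
    ring
  · exact if_neg hx

lemma PsiPAM_eq_sum_Text (M : ℕ) (σ : ℝ) :
    PsiPAM M σ = (2 / (M : ℝ)) * ((M / 2 : ℕ) * σ ^ 2 + ∑ k ∈ Icc 1 (M / 2),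
      (Text σ ((M : ℝ) - 1 - (2 * (k : ℝ) - 1)) + Text σ ((M : ℝ) - 1 + (2 * (k : ℝ) - 1)))) := by
  have hconst : ((M / 2 : ℕ) : ℝ) * σ ^ 2 = ∑ _k ∈ Icc 1 (M / 2), σ ^ 2 := by simp
  rw [PsiPAM, hconst, ← sum_add_distrib]
  congr 1
  refine sum_congr rfl fun k _ ↦ ?_
  rw [Text_eq, Text_eq]
  ring

theorem Finset.sum_Icc_reflect_add_shift {β : Type*} [AddCommMonoid β] (g : ℕ → β) (n : ℕ) :
    ∑ k ∈ Icc 1 n, (g (n - k) + g (n + k - 1)) = ∑ j ∈ range (n + n), g j := by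
  rw [← Ico_add_one_right_eq_Icc, sum_Ico_eq_sum_range, add_tsub_cancel_right, sum_add_distrib,
    sum_range_add, ← sum_range_reflect g n]
  congr 1 <;> refine sum_congr rfl fun k hk ↦ ?_ <;> grind

theorem Finset.sum_range_eq_add_sum_Icc {β : Type*} [AddCommMonoid β] (g : ℕ → β) {m : ℕ}
    (hm : 0 < m) : ∑ j ∈ range m, g j = g 0 + ∑ j ∈ Icc 1 (m - 1), g j := by
  obtain ⟨m, rfl⟩ := Nat.exists_eq_add_of_lt hm
  rw [zero_add, add_tsub_cancel_right, sum_range_succ', ← Ico_add_one_right_eq_Icc,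
    sum_Ico_eq_sum_range, add_tsub_cancel_right, add_comm]
  simp only [add_comm 1]

lemma sum_Icc_pair_eq_sum_range_two_mul {β : Type*} [AddCommMonoid β] (f : ℝ → β) (n : ℕ) :
    ∑ k ∈ Icc 1 n, (f (((n + n : ℕ) : ℝ) - 1 - (2 * (k : ℝ) - 1))
        + f (((n + n : ℕ) : ℝ) - 1 + (2 * (k : ℝ) - 1)))
      = ∑ j ∈ range (n + n), f (2 * (j : ℝ)) := by
  rw [← sum_Icc_reflect_add_shift]
  refine sum_congr rfl fun k hk ↦ ?_
  obtain ⟨hk1, hkn⟩ := mem_Icc.mp hk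
  push_cast [hkn, Nat.cast_sub (by omega : 1 ≤ n + k)]
  ring_nf

theorem box_sum_eq_psi_pam_general (M : ℕ) (hMe : Even M) (hM : 2 ≤ M) (σ : ℝ) :
    (((M:ℝ) - 1) / (M:ℝ) * σ^2
        + (2 / (M:ℝ)) * ∑ j ∈ Finset.Icc 1 (M - 1), Text σ (2 * (j:ℝ))
      = σ^2 + (2 / (M:ℝ)) * ∑ k ∈ Finset.Icc 1 (M / 2),
          (Text σ ((M:ℝ) - 1 - (2 * (k:ℝ) - 1)) + Text σ ((M:ℝ) - 1 + (2 * (k:ℝ) - 1)))) ∧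
    (σ^2 + (2 / (M:ℝ)) * ∑ k ∈ Finset.Icc 1 (M / 2),
          (Text σ ((M:ℝ) - 1 - (2 * (k:ℝ) - 1)) + Text σ ((M:ℝ) - 1 + (2 * (k:ℝ) - 1)))
      = PsiPAM M σ) := by
  obtain ⟨n, rfl⟩ := hMe
  have hhalf : (n + n) / 2 = n := by omega
  have hn : (n : ℝ) ≠ 0 := by exact_mod_cast (by omega : n ≠ 0)
  have hfold : ∑ k ∈ Icc 1 ((n + n) / 2),
      (Text σ (((n + n : ℕ) : ℝ) - 1 - (2 * (k : ℝ) - 1))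
        + Text σ (((n + n : ℕ) : ℝ) - 1 + (2 * (k : ℝ) - 1)))
      = -σ ^ 2 / 2 + ∑ j ∈ Icc 1 (n + n - 1), Text σ (2 * (j : ℝ)) := by
    rw [hhalf, sum_Icc_pair_eq_sum_range_two_mul, sum_range_eq_add_sum_Icc _ (by omega),
      Nat.cast_zero, mul_zero, Text_zero]
  refine ⟨?_, ?_⟩
  · rw [hfold]
    field_simp
    ring
  · rw [PsiPAM_eq_sum_Text, hhalf]
    push_cast
    field_simp
    ring

/-- Index reshuffling: the stationarity expression of the box-relaxation
objective equals `Ψ^PAM(σ²)`. Here `ᾱ_k = α − (2k−1)`, `α_k = α + (2k−1)`,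
`α = M − 1`, and `K = {2, 4, …, 2(M−1)}`. -/
theorem box_sum_eq_psi_pam (M : ℕ) (hMe : Even M) (hM : 2 ≤ M) (σ : ℝ) (hσ : 0 < σ) :
    (((M:ℝ) - 1) / (M:ℝ) * σ^2
        + (2 / (M:ℝ)) * ∑ j ∈ Finset.Icc 1 (M - 1), Text σ (2 * (j:ℝ))
      = σ^2 + (2 / (M:ℝ)) * ∑ k ∈ Finset.Icc 1 (M / 2),
          (Text σ ((M:ℝ) - 1 - (2 * (k:ℝ) - 1)) + Text σ ((M:ℝ) - 1 + (2 * (k:ℝ) - 1)))) ∧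
    (σ^2 + (2 / (M:ℝ)) * ∑ k ∈ Finset.Icc 1 (M / 2),
          (Text σ ((M:ℝ) - 1 - (2 * (k:ℝ) - 1)) + Text σ ((M:ℝ) - 1 + (2 * (k:ℝ) - 1)))
      = PsiPAM M σ) :=
  box_sum_eq_psi_pam_general M hMe hM σ
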